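/- arXiv:1104.1410 — 4 statements merged into one kernel-verified Lean document; each statement's English description precedes it below -/
import Mathlib

section
/- For 0 < p ≤ 1 and a positive integer s, setting m = ⌈s/p⌉, the quantity p_fail(p,m) = (1-p)·(p² + (1-p)²)^m satisfies p_fail(p,m) ≤ 1/(2·e·s). -/
lemma aux_xexp (x : ℝ) : x * Real.exp (-x) ≤ Real.exp (-1) := by
  have h : x ≤ Real.exp (x - 1) := by
    have := Real.add_one_le_exp (x - 1); linarith
  calc x * Real.exp (-x) ≤ Real.exp (x - 1) * Real.exp (-x) :=
        mul_le_mul_of_nonneg_right h (Real.exp_pos _).le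
    _ = Real.exp (-1) := by rw [← Real.exp_add]; ring_nf

/-- For `0 < p ≤ 1` and a positive integer `s`, with `m = ⌈s/p⌉`,
the failure probability `p_fail(p,m) = (1-p)·(p² + (1-p)²)^m` satisfies
`p_fail(p,m) ≤ 1/(2·e·s)`. -/
theorem stmt6 (p : ℝ) (hp0 : 0 < p) (hp1 : p ≤ 1) (s : ℕ) (hs : 0 < s) :
    (1 - p) * (p ^ 2 + (1 - p) ^ 2) ^ (⌈(s : ℝ) / p⌉₊) ≤
      1 / (2 * Real.exp 1 * s) := by
  have hs0 : (0:ℝ) < s := by exact_mod_cast hs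
  set q : ℝ := 1 - p with hq
  have hq0 : 0 ≤ q := by simp [hq]; linarith
  set m : ℕ := ⌈(s : ℝ) / p⌉₊ with hmdef
  have hm : (s:ℝ)/p ≤ m := Nat.le_ceil _
  have hps : (s:ℝ) ≤ p * m := by
    rw [div_le_iff₀ hp0] at hm; linarith
  have hr0 : 0 ≤ p^2 + q^2 := by positivity
  have hr : p^2 + q^2 ≤ Real.exp (-(2*p*q)) := by
    have := Real.add_one_le_exp (-(2*p*q))
    nlinarith
  have h1 : (p^2+q^2)^m ≤ Real.exp (-(2*p*q))^m :=
    pow_le_pow_left₀ hr0 hr m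
  have h2 : Real.exp (-(2*p*q))^m = Real.exp (-(2*p*q)*m) := by
    rw [← Real.exp_nat_mul]; ring_nf
  have h3 : Real.exp (-(2*p*q)*m) ≤ Real.exp (-(2*q*s)) := by
    apply Real.exp_le_exp.2
    nlinarith
  have h4 : q * Real.exp (-(2*q*s)) ≤ 1/(2*Real.exp 1*s) := by
    have key := aux_xexp (2*q*s)
    have heq : q * Real.exp (-(2*q*s)) = (2*q*s * Real.exp (-(2*q*s))) / (2*s) := by
      field_simp
    rw [heq]
    rw [div_le_div_iff₀ (by positivity) (by positivity)]
    have hrw : Real.exp (-1) * Real.exp 1 = 1 := by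
      rw [← Real.exp_add]; simp
    nlinarith [Real.exp_pos 1, Real.exp_pos (-(2*q*s)),
      mul_le_mul_of_nonneg_right key (by positivity : (0:ℝ) ≤ 2 * Real.exp 1 * s)]
  calc q * (p^2+q^2)^m ≤ q * Real.exp (-(2*q*s)) := by
        apply mul_le_mul_of_nonneg_left _ hq0
        calc (p^2+q^2)^m ≤ Real.exp (-(2*p*q))^m := h1
          _ = Real.exp (-(2*p*q)*m) := h2
          _ ≤ Real.exp (-(2*q*s)) := h3
    _ ≤ 1/(2*Real.exp 1*s) := h4
end

section
/- For 0 < p ≤ 1 and positive integer s, (1-p)·exp(-2·(s/p)·p·(1-p)) ≤ 1/(2·e·s). -/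
/-- For `0 < p ≤ 1` and a positive integer `s`,
`(1-p)·exp(-2·(s/p)·p·(1-p)) ≤ 1/(2·e·s)`. -/
theorem stmt8 (p : ℝ) (hp0 : 0 < p) (hp1 : p ≤ 1) (s : ℕ) (hs : 0 < s) :
    (1 - p) * Real.exp (-(2 * ((s : ℝ) / p) * p * (1 - p))) ≤
      1 / (2 * Real.exp 1 * s) := by
  have hs' : (0:ℝ) < s := Nat.cast_pos.mpr hs
  have hcancel : 2 * ((s : ℝ) / p) * p * (1 - p) = 2 * s * (1 - p) := by
    field_simp
  rw [hcancel]
  set x := 1 - p with hxdef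
  have hx : 0 ≤ x := by simp [hxdef]; linarith
  set t := 2 * (s:ℝ) * x with htdef
  have ht : 0 ≤ t := by positivity
  have key : t * Real.exp (-t) ≤ Real.exp (-1) := by
    have h1 : t ≤ Real.exp (t - 1) := by
      have := Real.add_one_le_exp (t - 1); linarith
    have h2 : t * Real.exp 1 ≤ Real.exp t := by
      calc t * Real.exp 1 ≤ Real.exp (t - 1) * Real.exp 1 := by
            exact mul_le_mul_of_nonneg_right h1 (Real.exp_pos 1).le
        _ = Real.exp t := by rw [← Real.exp_add]; ring_nf
    rw [Real.exp_neg, Real.exp_neg, inv_eq_one_div, inv_eq_one_div, mul_one_div,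
      div_le_div_iff₀ (Real.exp_pos t) (Real.exp_pos 1)]
    nlinarith [Real.exp_pos t, Real.exp_pos 1]
  -- key : 2 s x exp(-(2 s x)) ≤ 1/e
  have hexp1 := Real.exp_pos 1
  have : x * Real.exp (-t) ≤ Real.exp (-1) / (2 * s) := by
    rw [le_div_iff₀ (by positivity)]
    calc x * Real.exp (-t) * (2 * s) = t * Real.exp (-t) := by rw [htdef]; ring
      _ ≤ Real.exp (-1) := key
  calc x * Real.exp (-t) ≤ Real.exp (-1) / (2 * s) := this
    _ = 1 / (2 * Real.exp 1 * s) := by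
        rw [Real.exp_neg]
        field_simp
end

section
/- Consider a Markov chain on four states {ψ_t, ψ_t⊥, ψ_{t+1}, ψ_{t+1}⊥} where from ψ_t one moves to ψ_{t+1} with probability p and to ψ_{t+1}⊥ with probability 1−p; from ψ_{t+1}⊥ to ψ_t with probability 1−p and to ψ_t⊥ with probability p; from ψ_t⊥ to ψ_{t+1} with probability 1−p and ψ_{t+1}⊥ with probability p; and ψ_{t+1} is absorbing. Starting at ψ_t, the probability of not being absorbed after 2m+1 steps equals (1−p)·(p² + (1−p)²)^m. -/
open Matrix

/-- The alternating-measurement Markov chain on four states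
`{ψ_t, ψ_t⊥, ψ_{t+1}, ψ_{t+1}⊥}` (indexed `0, 1, 2, 3`), where state `2`
(`ψ_{t+1}`) is absorbing: starting at `ψ_t`, the probability of not being
absorbed after `2m+1` steps equals `(1−p)·(p² + (1−p)²)^m`. -/
theorem stmt13 (p : ℝ) (hp0 : 0 ≤ p) (hp1 : p ≤ 1) (m : ℕ)
    (T : Matrix (Fin 4) (Fin 4) ℝ)
    (hT : T = !![0, 0, p, 1 - p;
                 0, 0, 1 - p, p;
                 0, 0, 1, 0;
                 1 - p, p, 0, 0]) :
    ((Pi.single 0 1 : Fin 4 → ℝ) ᵥ* T ^ (2 * m + 1)) 0 +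
    ((Pi.single 0 1 : Fin 4 → ℝ) ᵥ* T ^ (2 * m + 1)) 1 +
    ((Pi.single 0 1 : Fin 4 → ℝ) ᵥ* T ^ (2 * m + 1)) 3 =
      (1 - p) * (p ^ 2 + (1 - p) ^ 2) ^ m := by
  have key : ∀ n : ℕ, (Pi.single 0 1 : Fin 4 → ℝ) ᵥ* T ^ (2 * n + 1) =
      ![0, 0, 1 - (1 - p) * (p ^ 2 + (1 - p) ^ 2) ^ n,
        (1 - p) * (p ^ 2 + (1 - p) ^ 2) ^ n] := by
    intro n
    induction n with
    | zero =>
      subst hT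
      ext i
      fin_cases i <;>
        simp [Matrix.vecMul, dotProduct, Fin.sum_univ_four, Pi.single_apply] <;> ring
    | succ k ih =>
      have h2 : 2 * (k + 1) + 1 = (2 * k + 1) + 2 := by ring
      rw [h2, pow_add, ← Matrix.vecMul_vecMul, ih, show T ^ 2 = T * T from pow_two T, ← Matrix.vecMul_vecMul]
      subst hT
      ext i
      fin_cases i <;>
        simp [Matrix.vecMul, dotProduct, Fin.sum_univ_four] <;> ring
  rw [key]
  simp
end

section
/- Let P and Q be orthogonal projections on a finite-dimensional Hilbert space. Then the space decomposes into an orthogonal direct sum of subspaces invariant under both P and Q, each of dimension at most 2. -/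
/-!
If `v` is an eigenvector of `P + Q` with eigenvalue `μ`, then `Q v = μ v - P v` and
`Q (P v) = (μ - 1) Q v`, so `span {v, P v}` is invariant under both idempotents. Such an
eigenvector exists in every nonzero jointly invariant subspace because `ℂ` is algebraically
closed. As `P` and `Q` are self-adjoint, the orthogonal complement of a jointly invariant
subspace `W` inside a jointly invariant `U` is again jointly invariant, so these subspaces of
dimension at most 2 can be split off one at a time, by induction on the dimension.
-/

open scoped InnerProductSpace
open Module End Submodule

theorem finrank_span_pair_le {K V : Type*} [DivisionRing K] [AddCommGroup V] [Module K V]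
    (v w : V) : finrank K (span K {v, w}) ≤ 2 := by
  classical
  exact (finrank_span_le_card _).trans (by simpa using Finset.card_le_two)

section Idempotent

variable {R M : Type*} [CommRing R] [AddCommGroup M] [Module R M] {P Q : End R M}

theorem span_pair_mem_invtSubmodule_of_add_apply_eq_smul (hP : IsIdempotentElem P)
    (hQ : IsIdempotentElem Q) {v : M} {μ : R} (hv : (P + Q) v = μ • v) :
    span R {v, P v} ∈ P.invtSubmodule ∧ span R {v, P v} ∈ Q.invtSubmodule := by
  have hPP : P (P v) = P v := congr($hP v)
  have hQQ : Q (Q v) = Q v := congr($hQ v)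
  rw [LinearMap.add_apply] at hv
  have hQv : Q v = μ • v - P v := eq_sub_of_add_eq' hv
  have hQPv : Q (P v) = (μ - 1) • Q v := by
    rw [eq_sub_of_add_eq hv, map_sub, map_smul, hQQ, sub_smul, one_smul]
  simp only [mem_invtSubmodule, span_le, Set.insert_subset_iff, Set.singleton_subset_iff,
    SetLike.mem_coe, mem_comap, mem_span_pair]
  refine ⟨⟨⟨0, 1, by simp⟩, ⟨0, 1, by simp [hPP]⟩⟩,
    ⟨⟨μ, -1, ?_⟩, ⟨(μ - 1) * μ, -(μ - 1), ?_⟩⟩⟩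
  · rw [hQv]; module
  · rw [hQPv, hQv]; module

end Idempotent

section AlgClosed

variable {K V : Type*} [Field K] [IsAlgClosed K] [AddCommGroup V] [Module K V]
  [FiniteDimensional K V] {P Q : End K V}

theorem exists_le_ne_bot_invtSubmodule_finrank_le_two (hP : IsIdempotentElem P)
    (hQ : IsIdempotentElem Q) {U : Submodule K V} (hU : U ≠ ⊥) (hUP : U ∈ P.invtSubmodule)
    (hUQ : U ∈ Q.invtSubmodule) :
    ∃ W ≤ U, W ≠ ⊥ ∧ W ∈ P.invtSubmodule ∧ W ∈ Q.invtSubmodule ∧ finrank K W ≤ 2 := by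
  have hUPQ : U ∈ (P + Q).invtSubmodule :=
    invtSubmodule_inf_invtSubmodule_le_invtSubmodule_add _ _ ⟨hUP, hUQ⟩
  have : Nontrivial U := nontrivial_iff_ne_bot.mpr hU
  obtain ⟨μ, hμ⟩ := exists_eigenvalue ((P + Q).restrict hUPQ)
  obtain ⟨v, hv⟩ := hμ.exists_hasEigenvector
  have hv_eq : (P + Q) v = μ • (v : V) := congr(Subtype.val $(hv.apply_eq_smul))
  obtain ⟨hWP, hWQ⟩ := span_pair_mem_invtSubmodule_of_add_apply_eq_smul hP hQ hv_eq
  refine ⟨span K {(v : V), P v}, ?_, ?_, hWP, hWQ, finrank_span_pair_le _ _⟩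
  · rw [span_le, Set.insert_subset_iff, Set.singleton_subset_iff]
    exact ⟨v.2, hUP v.2⟩
  · rw [Ne, span_eq_bot]
    exact fun h => hv.2 (Subtype.ext (h _ (Set.mem_insert _ _)))

end AlgClosed

section Symmetric

variable {𝕜 E : Type*} [RCLike 𝕜] [NormedAddCommGroup E] [InnerProductSpace 𝕜 E]
  [FiniteDimensional 𝕜 E]

theorem exists_pairwise_isOrtho_iSup_eq_of_forall_exists_le {S : Set (End 𝕜 E)}
    (hS : ∀ T ∈ S, T.IsSymmetric) {n : ℕ}
    (hsmall : ∀ U : Submodule 𝕜 E, U ≠ ⊥ → (∀ T ∈ S, U ∈ T.invtSubmodule) →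
      ∃ W ≤ U, W ≠ ⊥ ∧ (∀ T ∈ S, W ∈ T.invtSubmodule) ∧ finrank 𝕜 W ≤ n)
    (U : Submodule 𝕜 E) (hU : ∀ T ∈ S, U ∈ T.invtSubmodule) :
    ∃ (ι : Type) (_ : Fintype ι) (W : ι → Submodule 𝕜 E), ⨆ i, W i = U ∧
      Pairwise (fun i j => W i ⟂ W j) ∧ (∀ i, ∀ T ∈ S, W i ∈ T.invtSubmodule) ∧
      ∀ i, finrank 𝕜 (W i) ≤ n := by
  induction hd : finrank 𝕜 U using Nat.strong_induction_on generalizing U with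
  | _ d ih =>
  obtain rfl | hU0 := eq_or_ne U ⊥
  · exact ⟨Empty, inferInstance, Empty.elim, iSup_of_empty _, fun i => i.elim,
      fun i => i.elim, fun i => i.elim⟩
  obtain ⟨W₀, hW₀U, hW₀0, hW₀inv, hW₀n⟩ := hsmall U hU0 hU
  have hrest : finrank 𝕜 ↥(W₀ᗮ ⊓ U) < d := by
    have := finrank_add_inf_finrank_orthogonal hW₀U
    have := Submodule.finrank_eq_zero.not.mpr hW₀0
    omega
  obtain ⟨ι, _, W, hsup, horth, hinv, hn⟩ := ih _ hrest (W₀ᗮ ⊓ U)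
    (fun T hT => invtSubmodule.inf_mem ((hS T hT).orthogonalComplement_mem_invtSubmodule
      (hW₀inv T hT)) (hU T hT)) rfl
  refine ⟨Option ι, inferInstance, fun o => o.elim W₀ W, ?_, ?_, ?_, ?_⟩
  · rw [iSup_option]
    simp only [Option.elim]
    rw [hsup, sup_orthogonal_inf_of_hasOrthogonalProjection hW₀U]
  · rintro (_ | i) (_ | j) hij
    · exact absurd rfl hij
    · exact (isOrtho_orthogonal_right W₀).mono_right ((le_iSup W j).trans (hsup ▸ inf_le_left))
    · exact (isOrtho_orthogonal_left W₀).mono_left ((le_iSup W i).trans (hsup ▸ inf_le_left))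
    · exact horth (fun h => hij (congrArg some h))
  · rintro (_ | i)
    exacts [hW₀inv, hinv i]
  · rintro (_ | i)
    exacts [hW₀n, hn i]

end Symmetric

/-- Jordan's lemma: two orthogonal projections `P, Q` on a finite-dimensional
complex Hilbert space admit a decomposition of the space into an orthogonal
family of subspaces, jointly spanning, each invariant under both `P` and `Q`
and of dimension at most 2. -/
theorem stmt17 {E : Type*} [NormedAddCommGroup E] [InnerProductSpace ℂ E]
    [FiniteDimensional ℂ E]
    (P Q : E →ₗ[ℂ] E) (hP2 : P ∘ₗ P = P) (hQ2 : Q ∘ₗ Q = Q)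
    (hPs : P.IsSymmetric) (hQs : Q.IsSymmetric) :
    ∃ (ι : Type) (_ : Fintype ι) (W : ι → Submodule ℂ E),
      (⨆ i, W i) = ⊤ ∧
      (∀ i j, i ≠ j → ∀ x ∈ W i, ∀ y ∈ W j, ⟪x, y⟫_ℂ = 0) ∧
      (∀ i, Submodule.map P (W i) ≤ W i) ∧
      (∀ i, Submodule.map Q (W i) ≤ W i) ∧
      (∀ i, Module.finrank ℂ (W i) ≤ 2) := by
  have hsmall (U : Submodule ℂ E) (hU : U ≠ ⊥)
      (hUinv : ∀ T ∈ ({P, Q} : Set (End ℂ E)), U ∈ T.invtSubmodule) :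
      ∃ W ≤ U, W ≠ ⊥ ∧ (∀ T ∈ ({P, Q} : Set (End ℂ E)), W ∈ T.invtSubmodule) ∧
        finrank ℂ W ≤ 2 := by
    simp only [Set.mem_insert_iff, Set.mem_singleton_iff, forall_eq_or_imp, forall_eq]
      at hUinv ⊢
    obtain ⟨W, hWU, hW0, hWP, hWQ, hW2⟩ :=
      exists_le_ne_bot_invtSubmodule_finrank_le_two hP2 hQ2 hU hUinv.1 hUinv.2
    exact ⟨W, hWU, hW0, ⟨hWP, hWQ⟩, hW2⟩
  obtain ⟨ι, _, W, hsup, horth, hinv, h2⟩ :=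
    exists_pairwise_isOrtho_iSup_eq_of_forall_exists_le (by simpa using ⟨hPs, hQs⟩) hsmall ⊤
      (by simp)
  simp only [Set.mem_insert_iff, Set.mem_singleton_iff, forall_eq_or_imp, forall_eq,
    mem_invtSubmodule_iff_map_le] at hinv
  exact ⟨ι, ‹_›, W, hsup, fun i j hij => isOrtho_iff_inner_eq.mp (horth hij),
    fun i => (hinv i).1, fun i => (hinv i).2, h2⟩
end
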